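/- Let h_1, …, h_K ∈ ℂ^M, Γ_1, …, Γ_K > 0, σ_1², …, σ_K² > 0, and let W̄_1, …, W̄_K ∈ ℂ^{M×M} be Hermitian positive semidefinite satisfying for every k the Type-II SINR constraint (1/Γ_k) h_k^H W̄_k h_k − Σ_{i≠k} h_k^H W̄_i h_k ≥ σ_k². Define w*_k = (h_k^H W̄_k h_k)^{-1/2} W̄_k h_k and W*_k = w*_k (w*_k)^H. Then for every k, (1/Γ_k) h_k^H W*_k h_k − Σ_{i≠k} h_k^H W*_i h_k ≥ (1/Γ_k) h_k^H W̄_k h_k − Σ_{i≠k} h_k^H W̄_i h_k ≥ σ_k²; that is, the Type-II SINR constraints remain satisfied by the rank-one matrices W*_k. -/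

import Mathlib

open Matrix ComplexOrder

lemma inner_piLp_equiv_symm_aux {M : ℕ} (x y : Fin M → ℂ) :
    inner ℂ ((WithLp.equiv 2 (Fin M → ℂ)).symm x) ((WithLp.equiv 2 (Fin M → ℂ)).symm y)
      = star x ⬝ᵥ y := by
  rw [dotProduct_comm]; rfl

lemma cs_dot {M : ℕ} (u v : Fin M → ℂ) :
    Complex.normSq (star u ⬝ᵥ v) ≤ (star u ⬝ᵥ u).re * (star v ⬝ᵥ v).re := by
  have h1 := norm_inner_le_norm (𝕜 := ℂ) ((WithLp.equiv 2 _).symm u) ((WithLp.equiv 2 _).symm v)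
  rw [inner_piLp_equiv_symm_aux] at h1
  have h2 : (star u ⬝ᵥ u).re = ‖(WithLp.equiv 2 (Fin M → ℂ)).symm u‖ ^ 2 := by
    rw [← inner_piLp_equiv_symm_aux, ← @inner_self_eq_norm_sq ℂ]
    rfl
  have h3 : (star v ⬝ᵥ v).re = ‖(WithLp.equiv 2 (Fin M → ℂ)).symm v‖ ^ 2 := by
    rw [← inner_piLp_equiv_symm_aux, ← @inner_self_eq_norm_sq ℂ]
    rfl
  calc Complex.normSq (star u ⬝ᵥ v) = ‖star u ⬝ᵥ v‖ ^ 2 := by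
        rw [← Complex.sq_norm]
    _ ≤ (‖(WithLp.equiv 2 (Fin M → ℂ)).symm u‖ * ‖(WithLp.equiv 2 (Fin M → ℂ)).symm v‖) ^ 2 := by
        apply pow_le_pow_left₀ (norm_nonneg _) h1
    _ = _ := by rw [h2, h3]; ring

lemma cs_quad {M : ℕ} {A : Matrix (Fin M) (Fin M) ℂ} (hA : A.PosSemidef) (x y : Fin M → ℂ) :
    Complex.normSq (star x ⬝ᵥ A *ᵥ y) ≤ (star x ⬝ᵥ A *ᵥ x).re * (star y ⬝ᵥ A *ᵥ y).re := by
  open scoped MatrixOrder Matrix.Norms.L2Operator in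
  obtain ⟨B, hB⟩ := CStarAlgebra.nonneg_iff_eq_star_mul_self.mp hA.nonneg
  rw [star_eq_conjTranspose] at hB
  subst hB
  have key : ∀ z w : Fin M → ℂ, star z ⬝ᵥ (Bᴴ * B) *ᵥ w = star (B *ᵥ z) ⬝ᵥ (B *ᵥ w) := by
    intro z w
    rw [← mulVec_mulVec, dotProduct_mulVec, vecMul_conjTranspose, star_star]
  rw [key, key, key]
  exact cs_dot _ _

lemma quad_form {M : ℕ} (wv x : Fin M → ℂ) :
    star x ⬝ᵥ (vecMulVec wv (star wv)) *ᵥ x = ((Complex.normSq (star x ⬝ᵥ wv) : ℝ) : ℂ) := by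
  have : star x ⬝ᵥ (vecMulVec wv (star wv)) *ᵥ x = (star x ⬝ᵥ wv) * star (star x ⬝ᵥ wv) := by
    simp only [dotProduct, mulVec, vecMulVec_apply, Pi.star_apply, star_sum, star_mul', star_star]
    rw [Finset.sum_mul]
    refine Finset.sum_congr rfl fun j _ => ?_
    rw [Finset.mul_sum, Finset.mul_sum]
    refine Finset.sum_congr rfl fun l _ => ?_
    ring
  rw [this, ← Complex.mul_conj]
  rfl

/-- Feasibility preservation for Type-II receivers (Proposition 2): the rank-one
matrices `W*ₖ` satisfy the Type-II SINR constraints, with an SINR margin no smaller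
than that of the original PSD matrices `W̄ₖ`. -/
theorem reconstruction_preserves_typeII_sinr {M K : ℕ}
    (h : Fin K → Fin M → ℂ) (Γ σsq : Fin K → ℝ)
    (hΓ : ∀ k, 0 < Γ k) (hσ : ∀ k, 0 < σsq k)
    (W : Fin K → Matrix (Fin M) (Fin M) ℂ)
    (hW : ∀ k, (W k).PosSemidef)
    (hSINR : ∀ k, (σsq k : ℂ) ≤ (1 / (Γ k : ℂ)) * (star (h k) ⬝ᵥ W k *ᵥ h k)
        - ∑ i ∈ Finset.univ.erase k, star (h k) ⬝ᵥ W i *ᵥ h k) :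
    let w : Fin K → Fin M → ℂ := fun k =>
      (((Real.sqrt ((star (h k) ⬝ᵥ W k *ᵥ h k).re))⁻¹ : ℝ) : ℂ) • (W k *ᵥ h k)
    let Wstar : Fin K → Matrix (Fin M) (Fin M) ℂ := fun k => vecMulVec (w k) (star (w k))
    ∀ k, (1 / (Γ k : ℂ)) * (star (h k) ⬝ᵥ W k *ᵥ h k)
          - ∑ i ∈ Finset.univ.erase k, star (h k) ⬝ᵥ W i *ᵥ h k
        ≤ (1 / (Γ k : ℂ)) * (star (h k) ⬝ᵥ Wstar k *ᵥ h k)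
          - ∑ i ∈ Finset.univ.erase k, star (h k) ⬝ᵥ Wstar i *ᵥ h k ∧
      (σsq k : ℂ) ≤ (1 / (Γ k : ℂ)) * (star (h k) ⬝ᵥ Wstar k *ᵥ h k)
          - ∑ i ∈ Finset.univ.erase k, star (h k) ⬝ᵥ Wstar i *ᵥ h k := by
  intro w Wstar k
  -- realness and nonnegativity of quadratic forms
  have hreal : ∀ i (x : Fin M → ℂ),
      star x ⬝ᵥ W i *ᵥ x = (((star x ⬝ᵥ W i *ᵥ x).re : ℝ) : ℂ) ∧
        0 ≤ (star x ⬝ᵥ W i *ᵥ x).re := by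
    intro i x
    have h0 := (hW i).dotProduct_mulVec_nonneg x
    rw [Complex.le_def] at h0
    refine ⟨Complex.ext rfl ?_, by simpa using h0.1⟩
    simp [← h0.2]
  -- value of the rank-one quadratic form
  have hval : ∀ i, star (h k) ⬝ᵥ Wstar i *ᵥ h k
      = ((((Real.sqrt ((star (h i) ⬝ᵥ W i *ᵥ h i).re))⁻¹ ^ 2
            * Complex.normSq (star (h k) ⬝ᵥ W i *ᵥ h i) : ℝ)) : ℂ) := by
    intro i
    show star (h k) ⬝ᵥ (vecMulVec (w i) (star (w i))) *ᵥ h k = _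
    rw [quad_form]
    have hz : star (h k) ⬝ᵥ w i
        = (((Real.sqrt ((star (h i) ⬝ᵥ W i *ᵥ h i).re))⁻¹ : ℝ) : ℂ)
          * (star (h k) ⬝ᵥ W i *ᵥ h i) := by
      show star (h k) ⬝ᵥ (_ • (W i *ᵥ h i)) = _
      rw [dotProduct_smul, smul_eq_mul]
    rw [hz, Complex.normSq_mul, Complex.normSq_ofReal]
    congr 1
    ring
  -- per-index inequality
  have key : ∀ i, star (h k) ⬝ᵥ Wstar i *ᵥ h k ≤ star (h k) ⬝ᵥ W i *ᵥ h k := by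
    intro i
    rw [hval i, (hreal i (h k)).1]
    rw [Complex.real_le_real]
    set d := (star (h i) ⬝ᵥ W i *ᵥ h i).re with hd
    rcases eq_or_lt_of_le (hreal i (h i)).2 with h0 | h0
    · have : W i *ᵥ h i = 0 := by
        rw [← (hW i).dotProduct_mulVec_zero_iff]
        rw [(hreal i (h i)).1]
        exact_mod_cast h0.symm
      rw [this]
      simp [(hreal i (h k)).2]
    · have hs : (Real.sqrt d)⁻¹ ^ 2 = d⁻¹ := by
        rw [← Real.sqrt_inv, Real.sq_sqrt (by positivity)]
      rw [hs]
      have hcs := cs_quad (hW i) (h k) (h i)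
      rw [inv_mul_le_iff₀ h0, mul_comm]
      exact hcs
  -- equality at k
  have keyk : star (h k) ⬝ᵥ Wstar k *ᵥ h k = star (h k) ⬝ᵥ W k *ᵥ h k := by
    rw [hval k, (hreal k (h k)).1]
    congr 1
    simp only [Complex.normSq_ofReal, Complex.ofReal_re]
    set d := (star (h k) ⬝ᵥ W k *ᵥ h k).re with hd
    rcases eq_or_lt_of_le ((hreal k (h k)).2) with h0 | h0
    · rw [← hd] at h0
      rw [← h0]; simp
    · rw [← hd] at h0
      have hne := h0.ne'
      have hs : (Real.sqrt d)⁻¹ ^ 2 = d⁻¹ := by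
        rw [← Real.sqrt_inv, Real.sq_sqrt (by positivity)]
      rw [hs]
      field_simp
  have hsum : ∑ i ∈ Finset.univ.erase k, star (h k) ⬝ᵥ Wstar i *ᵥ h k
      ≤ ∑ i ∈ Finset.univ.erase k, star (h k) ⬝ᵥ W i *ᵥ h k :=
    Finset.sum_le_sum fun i _ => key i
  have main : (1 / (Γ k : ℂ)) * (star (h k) ⬝ᵥ W k *ᵥ h k)
      - ∑ i ∈ Finset.univ.erase k, star (h k) ⬝ᵥ W i *ᵥ h k
      ≤ (1 / (Γ k : ℂ)) * (star (h k) ⬝ᵥ Wstar k *ᵥ h k)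
      - ∑ i ∈ Finset.univ.erase k, star (h k) ⬝ᵥ Wstar i *ᵥ h k := by
    rw [keyk]
    exact sub_le_sub_left hsum _
  exact ⟨main, le_trans (hSINR k) main⟩
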